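/- arXiv:2106.03942 — 2 statements merged into one kernel-verified Lean document; each statement's English description precedes it below -/
import Mathlib

section
/- For every integer n ≥ 0 and every complex number q with 0 < |q| < 1, the series ∑_{k=0}^∞ (q^{(n+k)²} − q^{(n+k+1)²}) · q^{−nk} · C_q(2n+k, 2n) converges absolutely and its sum equals q^{n²} / ∏_{j=1}^{n} (1 − q^{n+j}). -/
/-- The q-Pochhammer symbol `(a;q)_m = ∏_{l=0}^{m-1} (1 - a q^l)`. -/
noncomputable def qPoch (a q : ℂ) (m : ℕ) : ℂ := ∏ l ∈ Finset.range m, (1 - a * q ^ l)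

/-- The Gaussian binomial coefficient `C_q(m,r) = (q;q)_m / ((q;q)_r (q;q)_{m-r})`. -/
noncomputable def qBinom (q : ℂ) (m r : ℕ) : ℂ :=
  qPoch q q m / (qPoch q q r * qPoch q q (m - r))

/-!
Creative telescoping in `n`: writing `F(n, k) = (1 - q^{2n+2k+1}) q^{n²+nk+k²} C_q(2n+k, 2n)` for
the `k`-th term, there is an explicit `G(n, k)` with `G(n, 0) = 0` such that
`(1 - q^{2n+1})(1 - q^{2n+2}) F(n+1, k) = q^{2n+1}(1 - q^{n+1}) F(n, k) + G(n, k+1) - G(n, k)`.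
Since `G(n, ·)` is summable, summing over `k` shows that `S(n) = ∑ₖ F(n, k)` obeys the
first-order recurrence also satisfied by `q^{n²} / ∏_{j=1}^n (1 - q^{n+j})`, and both are `1`
at `n = 0`, where the series telescopes.
-/

open Finset

theorem Summable.hasSum_sub_add_one {G : Type*} [AddCommGroup G] [TopologicalSpace G]
    [IsTopologicalAddGroup G] {f : ℕ → G} (hf : Summable f) :
    HasSum (fun k => f k - f (k + 1)) (f 0) := by
  have h := hf.hasSum.sub ((hasSum_nat_add_iff' 1).2 hf.hasSum)
  simpa using h

section QBinomial

theorem qPoch_succ (q : ℂ) (m : ℕ) : qPoch q q (m + 1) = qPoch q q m * (1 - q ^ (m + 1)) := by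
  rw [qPoch, prod_range_succ, ← pow_succ']
  rfl

theorem qPoch_add (q : ℂ) (k r : ℕ) :
    qPoch q q (k + r) = qPoch q q k * ∏ i ∈ range r, (1 - q ^ (k + 1 + i)) := by
  rw [qPoch, prod_range_add]
  congr 1
  exact prod_congr rfl fun i _ => by ring

theorem qBinom_zero_right {q : ℂ} {m : ℕ} (hm : qPoch q q m ≠ 0) : qBinom q m 0 = 1 := by
  rw [qBinom, Nat.sub_zero, show qPoch q q 0 = 1 from prod_range_zero _, one_mul, div_self hm]

theorem qBinom_add_left_eq_prod_div (q : ℂ) (r k : ℕ) (hk : qPoch q q k ≠ 0) :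
    qBinom q (r + k) r = (∏ i ∈ range r, (1 - q ^ (k + 1 + i))) / qPoch q q r := by
  rw [qBinom, Nat.add_sub_cancel_left, add_comm, qPoch_add, mul_comm (qPoch q q r),
    mul_div_mul_left _ _ hk]

theorem one_sub_pow_mul_qBinom_add_add_one {q : ℂ} {r k : ℕ} (hr : qPoch q q r ≠ 0)
    (hk : qPoch q q (k + 1) ≠ 0) :
    (1 - q ^ (k + 1)) * qBinom q (r + (k + 1)) r = (1 - q ^ (r + k + 1)) * qBinom q (r + k) r := by
  rw [qPoch_succ] at hk
  obtain ⟨hk, hk1⟩ := mul_ne_zero_iff.1 hk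
  simp only [qBinom, Nat.add_sub_cancel_left]
  rw [← add_assoc, qPoch_succ, qPoch_succ]
  field_simp

theorem one_sub_pow_mul_qBinom_add_two_add {q : ℂ} {r k : ℕ} (hr : qPoch q q (r + 2) ≠ 0)
    (hk : qPoch q q k ≠ 0) :
    (1 - q ^ (r + 1)) * (1 - q ^ (r + 2)) * qBinom q (r + 2 + k) (r + 2)
      = (1 - q ^ (r + k + 1)) * (1 - q ^ (r + k + 2)) * qBinom q (r + k) r := by
  rw [qPoch_succ, qPoch_succ] at hr
  simp only [qBinom, Nat.add_sub_cancel_left]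
  rw [show r + 2 + k = r + k + 1 + 1 by ring, qPoch_succ, qPoch_succ, qPoch_succ q (r + 1),
    qPoch_succ q r]
  obtain ⟨⟨hr, hr1⟩, hr2⟩ := And.imp_left mul_ne_zero_iff.1 (mul_ne_zero_iff.1 hr)
  field_simp

end QBinomial

section NormLtOne

variable {q : ℂ}

theorem one_sub_pow_ne_zero (hq : ‖q‖ < 1) {m : ℕ} (hm : m ≠ 0) : 1 - q ^ m ≠ 0 := by
  rw [sub_ne_zero]
  intro h
  have : ‖q‖ ^ m < 1 := pow_lt_one₀ (norm_nonneg q) hq hm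
  rw [← norm_pow, ← h, norm_one] at this
  exact this.false

theorem qPoch_ne_zero (hq : ‖q‖ < 1) (m : ℕ) : qPoch q q m ≠ 0 :=
  prod_ne_zero_iff.2 fun l _ => by
    rw [← pow_succ']
    exact one_sub_pow_ne_zero hq l.succ_ne_zero

theorem norm_one_sub_pow_le_two (hq : ‖q‖ < 1) (m : ℕ) : ‖1 - q ^ m‖ ≤ 2 := by
  calc ‖1 - q ^ m‖ ≤ ‖(1 : ℂ)‖ + ‖q ^ m‖ := norm_sub_le _ _
    _ = 1 + ‖q‖ ^ m := by rw [norm_one, norm_pow]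
    _ ≤ 1 + 1 := by gcongr; exact pow_le_one₀ (norm_nonneg q) hq.le
    _ = 2 := by norm_num

theorem norm_pow_le_pow_of_le (hq : ‖q‖ < 1) {k e : ℕ} (hk : k ≤ e) :
    ‖q ^ e‖ ≤ ‖q‖ ^ k := by
  rw [norm_pow]
  exact pow_le_pow_of_le_one (norm_nonneg q) hq.le hk

theorem norm_qBinom_add_left_le (hq : ‖q‖ < 1) (r k : ℕ) :
    ‖qBinom q (r + k) r‖ ≤ 2 ^ r / ‖qPoch q q r‖ := by
  rw [qBinom_add_left_eq_prod_div q r k (qPoch_ne_zero hq k), norm_div, norm_prod]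
  gcongr
  calc ∏ i ∈ range r, ‖1 - q ^ (k + 1 + i)‖ ≤ ∏ _i ∈ range r, (2 : ℝ) :=
        prod_le_prod (fun _ _ => norm_nonneg _) fun _ _ => norm_one_sub_pow_le_two hq _
    _ = 2 ^ r := by simp

theorem summable_norm_mul_qBinom (hq : ‖q‖ < 1) {f : ℕ → ℂ} {C : ℝ}
    (hf : ∀ k, ‖f k‖ ≤ C * ‖q‖ ^ k) (r : ℕ) :
    Summable fun k => ‖f k * qBinom q (r + k) r‖ := by
  refine .of_nonneg_of_le (fun _ => norm_nonneg _) (fun k => ?_)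
    ((summable_geometric_of_lt_one (norm_nonneg q) hq).mul_left (C * (2 ^ r / ‖qPoch q q r‖)))
  calc ‖f k * qBinom q (r + k) r‖ ≤ C * ‖q‖ ^ k * (2 ^ r / ‖qPoch q q r‖) := by
        rw [norm_mul]
        exact mul_le_mul (hf k) (norm_qBinom_add_left_le hq r k) (norm_nonneg _)
          ((norm_nonneg _).trans (hf k))
    _ = C * (2 ^ r / ‖qPoch q q r‖) * ‖q‖ ^ k := by ring

end NormLtOne

namespace MinusOneSurgery

noncomputable def summand (q : ℂ) (n k : ℕ) : ℂ :=
  (1 - q ^ (2 * n + 2 * k + 1)) * q ^ (n ^ 2 + n * k + k ^ 2) * qBinom q (2 * n + k) (2 * n)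

/-- The telescoping part of `summand_succ_recurrence`, found by the q-Zeilberger algorithm. -/
noncomputable def certificate (q : ℂ) (n k : ℕ) : ℂ :=
  q ^ (n ^ 2 + n * k + k ^ 2 + 2 * n + 1) * (1 - q ^ k) *
    (1 - q ^ (n + 1) - q ^ (n + k + 1) * (1 - q ^ (2 * n + k + 1))) * qBinom q (2 * n + k) (2 * n)

noncomputable def closedForm (q : ℂ) (n : ℕ) : ℂ :=
  q ^ (n ^ 2) / ∏ j ∈ range n, (1 - q ^ (n + j + 1))

theorem certificate_zero (q : ℂ) (n : ℕ) : certificate q n 0 = 0 := by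
  simp [certificate]

variable {q : ℂ}

theorem summand_succ_recurrence (hq : ‖q‖ < 1) (n k : ℕ) :
    (1 - q ^ (2 * n + 1)) * (1 - q ^ (2 * n + 2)) * summand q (n + 1) k
      = q ^ (2 * n + 1) * (1 - q ^ (n + 1)) * summand q n k
        - (certificate q n k - certificate q n (k + 1)) := by
  have h1 := one_sub_pow_mul_qBinom_add_add_one (r := 2 * n) (k := k)
    (qPoch_ne_zero hq _) (qPoch_ne_zero hq _)
  have h2 := one_sub_pow_mul_qBinom_add_two_add (r := 2 * n) (k := k)
    (qPoch_ne_zero hq _) (qPoch_ne_zero hq _)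
  simp only [summand, certificate, show 2 * (n + 1) = 2 * n + 2 by ring]
  linear_combination (1 - q ^ (2 * n + 2 * k + 3)) * q ^ ((n + 1) ^ 2 + (n + 1) * k + k ^ 2) * h2
    - q ^ (n ^ 2 + n * (k + 1) + (k + 1) ^ 2 + 2 * n + 1)
      * (1 - q ^ (n + 1) - q ^ (n + (k + 1) + 1) * (1 - q ^ (2 * n + (k + 1) + 1))) * h1

theorem closedForm_succ (hq : ‖q‖ < 1) (n : ℕ) :
    (1 - q ^ (2 * n + 1)) * (1 - q ^ (2 * n + 2)) * closedForm q (n + 1)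
      = q ^ (2 * n + 1) * (1 - q ^ (n + 1)) * closedForm q n := by
  have hprod : (∏ j ∈ range (n + 1), (1 - q ^ (n + 1 + j + 1))) * (1 - q ^ (n + 1))
      = (∏ j ∈ range n, (1 - q ^ (n + j + 1)))
        * ((1 - q ^ (2 * n + 1)) * (1 - q ^ (2 * n + 2))) := by
    have h := prod_range_succ' (fun j => (1 : ℂ) - q ^ (n + 1 + j)) (n + 1)
    simp only [add_zero, ← add_assoc] at h
    rw [← h, prod_range_succ, prod_range_succ]
    simp only [add_right_comm n 1]
    ring_nf
  have hne : ∀ m, ∏ j ∈ range m, (1 - q ^ (m + j + 1)) ≠ 0 := fun m =>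
    prod_ne_zero_iff.2 fun j _ => one_sub_pow_ne_zero hq (by omega)
  have h0 := hne n
  have h1 := hne (n + 1)
  rw [closedForm, closedForm]
  field_simp
  linear_combination (-(q ^ (2 * n + 1) * q ^ (n ^ 2))) * hprod

theorem summable_norm_summand (hq : ‖q‖ < 1) (n : ℕ) :
    Summable fun k => ‖summand q n k‖ := by
  refine summable_norm_mul_qBinom hq (C := 2) (fun k => ?_) (2 * n)
  rw [norm_mul]
  exact mul_le_mul (norm_one_sub_pow_le_two hq _) (norm_pow_le_pow_of_le hq (by nlinarith))
    (norm_nonneg _) zero_le_two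

theorem summable_certificate (hq : ‖q‖ < 1) (n : ℕ) : Summable (certificate q n) := by
  refine .of_norm (summable_norm_mul_qBinom hq (C := 8) (fun k => ?_) (2 * n))
  have hP : ‖1 - q ^ (n + 1) - q ^ (n + k + 1) * (1 - q ^ (2 * n + k + 1))‖ ≤ 2 + 1 * 2 := by
    refine (norm_sub_le _ _).trans (add_le_add (norm_one_sub_pow_le_two hq _) ?_)
    rw [norm_mul]
    exact mul_le_mul (by simpa using norm_pow_le_pow_of_le hq (Nat.zero_le (n + k + 1)))
      (norm_one_sub_pow_le_two hq _) (norm_nonneg _) zero_le_one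
  rw [norm_mul, norm_mul]
  calc _ ≤ ‖q‖ ^ k * 2 * (2 + 1 * 2) := by
        gcongr
        · exact norm_pow_le_pow_of_le hq (by nlinarith)
        · exact norm_one_sub_pow_le_two hq _
    _ = 8 * ‖q‖ ^ k := by ring

theorem hasSum_summand (hq : ‖q‖ < 1) (n : ℕ) : HasSum (summand q n) (closedForm q n) := by
  induction n with
  | zero =>
    have hsummand : summand q 0 = fun k => q ^ (k ^ 2) - q ^ ((k + 1) ^ 2) := by
      ext k
      simp only [summand, qBinom_zero_right (qPoch_ne_zero hq _), mul_zero, zero_add]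
      ring
    have hsq : Summable fun k : ℕ => q ^ (k ^ 2) :=
      .of_norm_bounded (summable_geometric_of_lt_one (norm_nonneg q) hq)
        fun k => norm_pow_le_pow_of_le hq (Nat.le_self_pow two_ne_zero k)
    simpa [hsummand, closedForm] using hsq.hasSum_sub_add_one
  | succ n ih =>
    set c := (1 - q ^ (2 * n + 1)) * (1 - q ^ (2 * n + 2))
    set a := q ^ (2 * n + 1) * (1 - q ^ (n + 1))
    have hc : c ≠ 0 :=
      mul_ne_zero (one_sub_pow_ne_zero hq (by omega)) (one_sub_pow_ne_zero hq (by omega))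
    have hsummand : summand q (n + 1) = fun k =>
        c⁻¹ * (a * summand q n k - (certificate q n k - certificate q n (k + 1))) := by
      ext k
      rw [← summand_succ_recurrence hq, inv_mul_cancel_left₀ hc]
    have h := ((ih.mul_left a).sub (summable_certificate hq n).hasSum_sub_add_one).mul_left c⁻¹
    rwa [← hsummand, certificate_zero, sub_zero, ← closedForm_succ hq,
      inv_mul_cancel_left₀ hc] at h

end MinusOneSurgery

open MinusOneSurgery in
/-- Park's `−1`-surgery identity:
`∑_{k≥0} (q^{(n+k)²} − q^{(n+k+1)²}) q^{−nk} C_q(2n+k,2n) = q^{n²} / ∏_{j=1}^n (1 − q^{n+j})`,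
the series converging absolutely for `0 < |q| < 1`. -/
theorem minus_one_surgery_identity (n : ℕ) (q : ℂ) (hq0 : 0 < ‖q‖) (hq1 : ‖q‖ < 1) :
    Summable (fun k : ℕ =>
      ‖(q ^ ((n + k) ^ 2) - q ^ ((n + k + 1) ^ 2)) * q ^ (-(n * k : ℤ)) *
        qBinom q (2 * n + k) (2 * n)‖) ∧
    ∑' k : ℕ, (q ^ ((n + k) ^ 2) - q ^ ((n + k + 1) ^ 2)) * q ^ (-(n * k : ℤ)) *
        qBinom q (2 * n + k) (2 * n)
      = q ^ (n ^ 2) / ∏ j ∈ Finset.range n, (1 - q ^ (n + j + 1)) := by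
  have hterm : ∀ k : ℕ, (q ^ ((n + k) ^ 2) - q ^ ((n + k + 1) ^ 2)) * q ^ (-(n * k : ℤ)) *
      qBinom q (2 * n + k) (2 * n) = summand q n k := fun k => by
    have hpow : q ^ (n * k) ≠ 0 := pow_ne_zero _ (norm_pos_iff.1 hq0)
    rw [zpow_neg, ← Nat.cast_mul, zpow_natCast, summand]
    field_simp
    ring
  simp only [hterm]
  exact ⟨summable_norm_summand hq1 n, (hasSum_summand hq1 n).tsum_eq⟩
end

section
/- Let n ≥ 0, p ≥ 1, and b be integers. Then there exists a Laurent polynomial P ∈ ℤ[t, t^{−1}] such that: (a) for every complex t with 0 < |t| < 1, setting q := t^p, the series ∑_{k≥0, k≡b−n (mod p)} t^{(n+k)²} q^{−nk} (q^{k+1};q)_{2n} − ∑_{k≥0, k≡b−n−1 (mod p)} t^{(n+k+1)²} q^{−nk} (q^{k+1};q)_{2n} converges absolutely and equals P(t); and (b) for every complex t with |t| > 1, setting q := t^p, the series ∑_{k≥0, k≡b−n (mod p)} t^{−(n+k)²} q^{−nk} (q^{k+1};q)_{2n} − ∑_{k≥0, k≡b−n−1 (mod p)} t^{−(n+k+1)²}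 q^{−nk} (q^{k+1};q)_{2n} converges absolutely and equals q^{n(2n+1)} P(t^{−1}). -/
/-!
Expanding `(q^{k+1};q)_{2n} = ∑_{S ⊆ {0,…,2n-1}} (-1)^{|S|} q^{|S|(k+1) + ∑ S}` splits each series
into `2^{2n}` theta-type series `∑_{m ≡ b (p)} ± t^{m² + (linear in m)}`, indexed by `S` and by
`m = n + k` resp. `m = n + k + 1`. The reflected complement `S ↦ {2n-1-i : i ∉ S}` sends the
families of the second series onto those of the first, shifted in `m` by `p(|S| - n)`; hence the
difference is a finite sum of monomials in `t^{±1}`. Part (b) follows from part (a) at `t⁻¹`: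
inverting `q` turns `(q^{k+1};q)_{2n}` into `q^{-2n(k+1)-n(2n-1)} (q^{k+1};q)_{2n}`, so each term
of (b) is `q^{n(2n+1)}` times the corresponding term of (a) at `t⁻¹`.
-/

open Finset LaurentPolynomial

lemma qPoch_eq_sum (a q : ℂ) (N : ℕ) :
    qPoch a q N = ∑ S : Finset (Fin N), (-a) ^ #S * q ^ ∑ i ∈ S, (i : ℕ) := by
  rw [qPoch, ← Fin.prod_univ_eq_prod_range (fun l => 1 - a * q ^ l)]
  simp_rw [sub_eq_neg_add, Fintype.prod_add, prod_const_one, mul_one, ← neg_mul,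
    prod_mul_distrib, prod_const, prod_pow_eq_pow_sum]

lemma qPoch_inv {a q : ℂ} (ha : a ≠ 0) (hq : q ≠ 0) (N : ℕ) :
    qPoch a⁻¹ q⁻¹ N = (-1) ^ N * (a ^ N * q ^ ∑ l ∈ range N, l)⁻¹ * qPoch a q N := by
  have h (l : ℕ) : 1 - a⁻¹ * q⁻¹ ^ l = -1 * (a * q ^ l)⁻¹ * (1 - a * q ^ l) := by
    rw [inv_pow, ← mul_inv]
    field_simp
    ring
  simp only [qPoch, h, prod_mul_distrib, prod_const, card_range, prod_inv_distrib]
  rw [prod_pow_eq_pow_sum]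

/-- The exponent of `t` in `t^{m²} q^{-nk} ∏_{i ∈ S} q^{k+1+i}` for `q = t^p`. -/
def thetaExponent (n p : ℕ) {N : ℕ} (S : Finset (Fin N)) (m k : ℤ) : ℤ :=
  m ^ 2 + p * (#S * (k + 1) + ∑ i ∈ S, ((i : ℕ) : ℤ) - n * k)

lemma pow_sq_mul_qPoch_eq_sum {t : ℂ} (ht : t ≠ 0) (n p N m k : ℕ) :
    t ^ (m ^ 2) * (t ^ p) ^ (-(n * k : ℤ)) * qPoch ((t ^ p) ^ (k + 1)) (t ^ p) N =
      ∑ S : Finset (Fin N), (-1) ^ #S * t ^ thetaExponent n p S m k := by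
  rw [qPoch_eq_sum, mul_sum]
  refine sum_congr rfl fun S _ => ?_
  have hpow : t ^ (m ^ 2) * (t ^ p) ^ (-(n * k : ℤ)) *
      (((t ^ p) ^ (k + 1)) ^ #S * (t ^ p) ^ ∑ i ∈ S, (i : ℕ)) = t ^ thetaExponent n p S m k := by
    simp only [thetaExponent, ← zpow_natCast, ← zpow_mul, ← zpow_add₀ ht]
    push_cast
    ring_nf
  rw [neg_pow]
  linear_combination (-1) ^ #S * hpow

lemma zpow_neg_mul_qPoch_eq {t : ℂ} (ht : t ≠ 0) (n p k Y : ℕ) :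
    t ^ (-(Y : ℤ)) * (t ^ p) ^ (-(n * k : ℤ)) * qPoch ((t ^ p) ^ (k + 1)) (t ^ p) (2 * n) =
      (t ^ p) ^ (n * (2 * n + 1)) *
        (t⁻¹ ^ Y * (t⁻¹ ^ p) ^ (-(n * k : ℤ)) *
          qPoch ((t⁻¹ ^ p) ^ (k + 1)) (t⁻¹ ^ p) (2 * n)) := by
  have hq : t ^ p ≠ 0 := pow_ne_zero p ht
  have hgauss : n * (2 * n + 1) = ∑ l ∈ range (2 * n), l + 2 * n := by
    have := sum_range_id_mul_two (2 * n)
    rcases n with _ | n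
    · simp
    · rw [show 2 * (n + 1) - 1 = 2 * n + 1 by omega] at this
      linarith
  rw [inv_pow t p, inv_pow (t ^ p) (k + 1), qPoch_inv (pow_ne_zero _ hq) hq, hgauss,
    Even.neg_one_pow (even_two_mul n)]
  simp only [zpow_neg, ← Nat.cast_mul, zpow_natCast, inv_pow, inv_inv]
  field_simp
  ring

def reflCompl {N : ℕ} (S : Finset (Fin N)) : Finset (Fin N) := Sᶜ.map Fin.revPerm.toEmbedding

lemma mem_reflCompl {N : ℕ} {S : Finset (Fin N)} {i : Fin N} : i ∈ reflCompl S ↔ i.rev ∉ S := by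
  simp [reflCompl, mem_map_equiv]

lemma reflCompl_involutive {N : ℕ} : Function.Involutive (reflCompl (N := N)) := fun S => by
  ext i
  simp [mem_reflCompl]

lemma card_reflCompl {N : ℕ} (S : Finset (Fin N)) : #(reflCompl S) = N - #S := by
  rw [reflCompl, card_map, card_compl, Fintype.card_fin]

lemma two_mul_sum_reflCompl {N : ℕ} (S : Finset (Fin N)) :
    2 * ∑ i ∈ reflCompl S, ((i : ℕ) : ℤ) =
      (N - 1) * (N - 2 * #S) + 2 * ∑ i ∈ S, ((i : ℕ) : ℤ) := by
  have hgauss : 2 * ∑ i : Fin N, ((i : ℕ) : ℤ) = N * (N - 1) := by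
    rw [Fin.sum_univ_eq_sum_range (fun i => (i : ℤ)), ← Nat.cast_sum, mul_comm,
      ← Nat.cast_ofNat, ← Nat.cast_mul, sum_range_id_mul_two]
    rcases N with _ | N <;> simp
  have hrev : ∑ i ∈ reflCompl S, ((i : ℕ) : ℤ) = ∑ i ∈ Sᶜ, ((N : ℤ) - 1 - (i : ℕ)) := by
    rw [reflCompl, sum_map]
    refine sum_congr rfl fun i _ => ?_
    simp only [Equiv.coe_toEmbedding, Fin.revPerm_apply, Fin.val_rev]
    omega
  have hcard : (#Sᶜ : ℤ) = N - #S := by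
    rw [card_compl, Fintype.card_fin,
      Nat.cast_sub (card_le_univ S |>.trans_eq (Fintype.card_fin N))]
  rw [← sum_compl_add_sum S] at hgauss
  rw [hrev, sum_sub_distrib, sum_const, nsmul_eq_mul, hcard]
  linear_combination (-1 : ℤ) * hgauss

lemma quadratic_sub_le (c₁ c₀ : ℤ) (k : ℕ) :
    (k : ℤ) - ((c₁.natAbs + 1) ^ 2 + c₀.natAbs) ≤ (k : ℤ) ^ 2 + c₁ * k + c₀ := by
  have h₁ : -(c₁.natAbs : ℤ) ≤ c₁ := by omega
  have h₀ : -(c₀.natAbs : ℤ) ≤ c₀ := by omega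
  nlinarith [sq_nonneg (2 * (k : ℤ) - c₁.natAbs - 1), sq_nonneg ((c₁.natAbs : ℤ) - 1)]

lemma summable_zpow_quadratic_nat {r : ℝ} (hr₀ : 0 < r) (hr₁ : r < 1) (c₁ c₀ : ℤ) :
    Summable fun k : ℕ => r ^ ((k : ℤ) ^ 2 + c₁ * k + c₀) := by
  set C : ℤ := (c₁.natAbs + 1) ^ 2 + c₀.natAbs
  refine .of_nonneg_of_le (fun k => by positivity) (fun k => ?_)
    ((summable_geometric_of_lt_one hr₀.le hr₁).mul_left (r ^ (-C)))
  calc r ^ ((k : ℤ) ^ 2 + c₁ * k + c₀) ≤ r ^ ((k : ℤ) - C) :=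
        zpow_le_zpow_right_of_le_one₀ hr₀ hr₁.le (quadratic_sub_le c₁ c₀ k)
    _ = r ^ (-C) * r ^ k := by rw [sub_eq_neg_add, zpow_add₀ hr₀.ne', zpow_natCast]

lemma summable_zpow_quadratic {r : ℝ} (hr₀ : 0 < r) (hr₁ : r < 1) (c₁ c₀ : ℤ) :
    Summable fun m : ℤ => r ^ (m ^ 2 + c₁ * m + c₀) := by
  refine summable_int_iff_summable_nat_and_neg.mpr
    ⟨summable_zpow_quadratic_nat hr₀ hr₁ c₁ c₀, ?_⟩
  simpa [neg_sq] using summable_zpow_quadratic_nat hr₀ hr₁ (-c₁) c₀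

lemma tsum_nat_add_eq_tsum_indicator {α : Type*} [AddCommMonoid α] [TopologicalSpace α]
    (f : ℤ → α) (a : ℤ) : ∑' k : ℕ, f (a + k) = ∑' m, (Set.Ici a).indicator f m := by
  have hinj : Function.Injective fun k : ℕ => a + k := fun k l h => by simpa using h
  rw [← hinj.tsum_eq]
  · simp
  · intro m hm
    have : a ≤ m := Set.mem_Ici.mp (Set.support_indicator_subset hm)
    exact ⟨(m - a).toNat, by simp only; omega⟩

lemma tsum_indicator_Ici_comp_add {α : Type*} [AddCommMonoid α] [TopologicalSpace α]
    (f g : ℤ → α) (s a : ℤ) (h : ∀ m, g (m + s) = f m) :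
    ∑' m, (Set.Ici a).indicator g m = ∑' m, (Set.Ici (a - s)).indicator f m := by
  rw [← (Equiv.addRight s).tsum_eq]
  congr 1
  ext m
  simp [Set.indicator_apply, h]

lemma tsum_indicator_Ici_sub_tsum_indicator_Ici {α : Type*} [NormedAddCommGroup α]
    [CompleteSpace α] {f : ℤ → α} (hf : Summable f) (a a' : ℤ) :
    ∑' m, (Set.Ici a).indicator f m - ∑' m, (Set.Ici a').indicator f m =
      ∑ m ∈ Ico a a', f m - ∑ m ∈ Ico a' a, f m := by
  wlog h : a ≤ a' generalizing a a'
  · rw [← neg_sub, this a' a (by omega), neg_sub]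
  have hsplit : (Set.Ici a).indicator f =
      (Set.Ici a').indicator f + (Ico a a' : Set ℤ).indicator f := by
    ext m
    simp only [Pi.add_apply, Set.indicator_apply, Set.mem_Ici, coe_Ico, Set.mem_Ico]
    split_ifs <;> first | omega | simp
  rw [hsplit, Pi.add_def, (hf.indicator _).tsum_add (hf.indicator _), ← sum_eq_tsum_indicator,
    Ico_eq_empty_of_le h, sum_empty]
  abel

lemma exists_aeval_div_eq_eval₂ {R K : Type*} [CommRing R] [Field K] [Algebra R K]
    (L : R[T;T⁻¹]) :
    ∃ (P : Polynomial R) (d : ℕ), ∀ (t : K) (ht : t ≠ 0),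
      eval₂ (algebraMap R K) (Units.mk0 t ht) L = Polynomial.aeval t P / t ^ d := by
  obtain ⟨d, P, hP⟩ := L.exists_T_pow
  refine ⟨P, d, fun t ht => ?_⟩
  have := congrArg (eval₂ (algebraMap R K) (Units.mk0 t ht)) hP
  rw [eval₂_toLaurent, map_mul, eval₂_T_n, Units.val_mk0] at this
  rw [eq_div_iff (pow_ne_zero d ht), Polynomial.aeval_def, this]

section ThetaSeries

variable (t : ℂ) (n p : ℕ) (b : ℤ) (j : ℕ)

/-- `j = 0` and `j = 1` give the summands of the two series of the theorem. -/
noncomputable def seriesTerm (k : ℕ) : ℂ :=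
  if (k : ℤ) ≡ b - n - j [ZMOD p] then
    t ^ ((n + k + j) ^ 2) * (t ^ p) ^ (-(n * k : ℤ)) * qPoch ((t ^ p) ^ (k + 1)) (t ^ p) (2 * n)
  else 0

noncomputable def familyTerm {N : ℕ} (S : Finset (Fin N)) (m : ℤ) : ℂ :=
  if m ≡ b [ZMOD p] then (-1) ^ #S * t ^ thetaExponent n p S m (m - n - j) else 0

noncomputable def familyMonomial {N : ℕ} (S : Finset (Fin N)) (m : ℤ) : ℤ[T;T⁻¹] :=
  if m ≡ b [ZMOD p] then C ((-1) ^ #S) * T (thetaExponent n p S m (m - n - j)) else 0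

variable {t}

lemma eval₂_familyMonomial (ht : t ≠ 0) {N : ℕ} (S : Finset (Fin N)) (m : ℤ) :
    eval₂ (algebraMap ℤ ℂ) (Units.mk0 t ht) (familyMonomial n p b j S m) =
      familyTerm t n p b j S m := by
  unfold familyMonomial familyTerm
  split_ifs <;> simp [Units.val_zpow_eq_zpow_val]

lemma summable_familyTerm (ht₀ : t ≠ 0) (ht₁ : ‖t‖ < 1) {N : ℕ} (S : Finset (Fin N)) :
    Summable (familyTerm t n p b j S) := by
  refine .of_norm_bounded (summable_zpow_quadratic (norm_pos_iff.mpr ht₀) ht₁ (p * (#S - n))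
    (p * (#S * (1 - n - j) + ∑ i ∈ S, ((i : ℕ) : ℤ) + n * (n + j)))) fun m => ?_
  unfold familyTerm
  split_ifs
  · rw [norm_mul, norm_pow, norm_neg, norm_one, one_pow, one_mul, norm_zpow, thetaExponent]
    exact le_of_eq (congrArg _ (by ring))
  · rw [norm_zero]
    positivity

lemma seriesTerm_eq_sum_familyTerm (ht : t ≠ 0) (k : ℕ) :
    seriesTerm t n p b j k = ∑ S : Finset (Fin (2 * n)), familyTerm t n p b j S (n + j + k) := by
  have hmod : (k : ℤ) ≡ b - n - j [ZMOD p] ↔ (n + j + k : ℤ) ≡ b [ZMOD p] := by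
    rw [Int.modEq_iff_dvd, Int.modEq_iff_dvd, show b - n - j - k = b - (n + j + k) by ring]
  unfold seriesTerm
  by_cases h : (k : ℤ) ≡ b - n - j [ZMOD p]
  · rw [if_pos h, pow_sq_mul_qPoch_eq_sum ht]
    refine sum_congr rfl fun S _ => ?_
    rw [familyTerm, if_pos (hmod.mp h)]
    congr 3 <;> push_cast <;> ring
  · rw [if_neg h]
    exact (sum_eq_zero fun S _ => if_neg (mt hmod.mpr h)).symm

lemma summable_norm_seriesTerm (ht₀ : t ≠ 0) (ht₁ : ‖t‖ < 1) :
    Summable fun k => ‖seriesTerm t n p b j k‖ := by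
  have hinj : Function.Injective fun k : ℕ => (n + j + k : ℤ) := fun k l h => by simpa using h
  have hS (S : Finset (Fin (2 * n))) : Summable fun k : ℕ => ‖familyTerm t n p b j S (n + j + k)‖ :=
    (summable_familyTerm n p b j ht₀ ht₁ S).norm.comp_injective hinj
  refine .of_nonneg_of_le (fun _ => norm_nonneg _) (fun k => ?_)
    (summable_sum (s := univ) fun S _ => hS S)
  rw [seriesTerm_eq_sum_familyTerm n p b j ht₀]
  exact norm_sum_le _ _

lemma tsum_seriesTerm (ht₀ : t ≠ 0) (ht₁ : ‖t‖ < 1) :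
    ∑' k, seriesTerm t n p b j k = ∑ S : Finset (Fin (2 * n)),
      ∑' m, (Set.Ici (n + j : ℤ)).indicator (familyTerm t n p b j S) m := by
  have hinj : Function.Injective fun k : ℕ => (n + j + k : ℤ) := fun k l h => by simpa using h
  have hS (S : Finset (Fin (2 * n))) : Summable fun k : ℕ => familyTerm t n p b j S (n + j + k) :=
    (summable_familyTerm n p b j ht₀ ht₁ S).comp_injective hinj
  simp_rw [seriesTerm_eq_sum_familyTerm n p b j ht₀]
  rw [Summable.tsum_finsetSum fun S _ => hS S]
  simp_rw [tsum_nat_add_eq_tsum_indicator]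

lemma familyTerm_reflCompl (S : Finset (Fin (2 * n))) (m : ℤ) :
    familyTerm t n p b 1 (reflCompl S) (m + p * (#S - n)) = familyTerm t n p b 0 S m := by
  have hS : #S ≤ 2 * n := card_le_univ S |>.trans_eq (Fintype.card_fin _)
  have hmod : m + p * (#S - n) ≡ b [ZMOD p] ↔ m ≡ b [ZMOD p] := by
    simp only [Int.ModEq, Int.add_mul_emod_self_left]
  have hsign : ((-1) : ℂ) ^ #(reflCompl S) = (-1) ^ #S := by
    rw [card_reflCompl, neg_one_pow_eq_pow_mod_two, neg_one_pow_eq_pow_mod_two (#S)]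
    congr 1
    omega
  have hcard : (#(reflCompl S) : ℤ) = 2 * n - #S := by
    rw [card_reflCompl, Nat.cast_sub hS]
    push_cast
    ring
  have hsum : ∑ i ∈ reflCompl S, ((i : ℕ) : ℤ) =
      (2 * n - 1) * (n - #S) + ∑ i ∈ S, ((i : ℕ) : ℤ) := by
    have := two_mul_sum_reflCompl S
    push_cast at this
    linarith
  unfold familyTerm
  rw [hsign, thetaExponent, thetaExponent, hcard, hsum]
  simp only [Nat.cast_one, Nat.cast_zero, sub_zero]
  exact if_congr hmod (by ring_nf) rfl

theorem exists_laurentPolynomial_tsum_sub_tsum :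
    ∃ L : ℤ[T;T⁻¹], ∀ (t : ℂ) (ht₀ : t ≠ 0), ‖t‖ < 1 →
      ∑' k, seriesTerm t n p b 0 k - ∑' k, seriesTerm t n p b 1 k =
        eval₂ (algebraMap ℤ ℂ) (Units.mk0 t ht₀) L := by
  let lb (S : Finset (Fin (2 * n))) : ℤ := n + 1 - p * (#S - n)
  refine ⟨∑ S : Finset (Fin (2 * n)), (∑ m ∈ Ico (n : ℤ) (lb S), familyMonomial n p b 0 S m -
    ∑ m ∈ Ico (lb S) n, familyMonomial n p b 0 S m), fun t ht₀ ht₁ => ?_⟩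
  have hpair : ∑ S : Finset (Fin (2 * n)),
      ∑' m, (Set.Ici (n + 1 : ℤ)).indicator (familyTerm t n p b 1 S) m =
        ∑ S : Finset (Fin (2 * n)),
          ∑' m, (Set.Ici (lb S)).indicator (familyTerm t n p b 0 S) m := by
    rw [← Equiv.sum_comp (reflCompl_involutive.toPerm _)]
    exact sum_congr rfl fun S _ =>
      tsum_indicator_Ici_comp_add _ _ _ _ (familyTerm_reflCompl n p b S)
  rw [tsum_seriesTerm n p b 0 ht₀ ht₁, tsum_seriesTerm n p b 1 ht₀ ht₁]
  simp only [Nat.cast_zero, add_zero, Nat.cast_one]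
  rw [hpair, ← sum_sub_distrib]
  simp only [tsum_indicator_Ici_sub_tsum_indicator_Ici (summable_familyTerm n p b 0 ht₀ ht₁ _),
    map_sum, map_sub, eval₂_familyMonomial n p b 0 ht₀]

lemma zpow_neg_summand_eq_mul_seriesTerm_inv (ht : t ≠ 0) (k : ℕ) :
    (if (k : ℤ) ≡ b - n - j [ZMOD p] then
      t ^ (-((n + k + j : ℤ) ^ 2)) * (t ^ p) ^ (-(n * k : ℤ)) *
        qPoch ((t ^ p) ^ (k + 1)) (t ^ p) (2 * n) else 0) =
      (t ^ p) ^ (n * (2 * n + 1)) * seriesTerm t⁻¹ n p b j k := by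
  unfold seriesTerm
  split_ifs
  · rw [← zpow_neg_mul_qPoch_eq ht]
    push_cast
    rfl
  · rw [mul_zero]

end ThetaSeries

theorem mod_p_theta_substitution_rational_general (n p : ℕ) (b : ℤ) :
    ∃ (P : Polynomial ℤ) (d : ℕ),
      (∀ t : ℂ, 0 < ‖t‖ → ‖t‖ < 1 →
        Summable (fun k : ℕ => ‖(if (k : ℤ) ≡ b - n [ZMOD (p : ℤ)] then
            t ^ ((n + k) ^ 2) * (t ^ p) ^ (-(n * k : ℤ)) *
              qPoch ((t ^ p) ^ (k + 1)) (t ^ p) (2 * n) else 0)‖) ∧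
        Summable (fun k : ℕ => ‖(if (k : ℤ) ≡ b - n - 1 [ZMOD (p : ℤ)] then
            t ^ ((n + k + 1) ^ 2) * (t ^ p) ^ (-(n * k : ℤ)) *
              qPoch ((t ^ p) ^ (k + 1)) (t ^ p) (2 * n) else 0)‖) ∧
        (∑' k : ℕ, if (k : ℤ) ≡ b - n [ZMOD (p : ℤ)] then
            t ^ ((n + k) ^ 2) * (t ^ p) ^ (-(n * k : ℤ)) *
              qPoch ((t ^ p) ^ (k + 1)) (t ^ p) (2 * n) else 0) -
        (∑' k : ℕ, if (k : ℤ) ≡ b - n - 1 [ZMOD (p : ℤ)] then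
            t ^ ((n + k + 1) ^ 2) * (t ^ p) ^ (-(n * k : ℤ)) *
              qPoch ((t ^ p) ^ (k + 1)) (t ^ p) (2 * n) else 0)
          = Polynomial.aeval t P / t ^ d) ∧
      (∀ t : ℂ, 1 < ‖t‖ →
        Summable (fun k : ℕ => ‖(if (k : ℤ) ≡ b - n [ZMOD (p : ℤ)] then
            t ^ (-((n + k : ℤ) ^ 2)) * (t ^ p) ^ (-(n * k : ℤ)) *
              qPoch ((t ^ p) ^ (k + 1)) (t ^ p) (2 * n) else 0)‖) ∧
        Summable (fun k : ℕ => ‖(if (k : ℤ) ≡ b - n - 1 [ZMOD (p : ℤ)] then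
            t ^ (-((n + k + 1 : ℤ) ^ 2)) * (t ^ p) ^ (-(n * k : ℤ)) *
              qPoch ((t ^ p) ^ (k + 1)) (t ^ p) (2 * n) else 0)‖) ∧
        (∑' k : ℕ, if (k : ℤ) ≡ b - n [ZMOD (p : ℤ)] then
            t ^ (-((n + k : ℤ) ^ 2)) * (t ^ p) ^ (-(n * k : ℤ)) *
              qPoch ((t ^ p) ^ (k + 1)) (t ^ p) (2 * n) else 0) -
        (∑' k : ℕ, if (k : ℤ) ≡ b - n - 1 [ZMOD (p : ℤ)] then
            t ^ (-((n + k + 1 : ℤ) ^ 2)) * (t ^ p) ^ (-(n * k : ℤ)) *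
              qPoch ((t ^ p) ^ (k + 1)) (t ^ p) (2 * n) else 0)
          = (t ^ p) ^ (n * (2 * n + 1)) * (Polynomial.aeval t⁻¹ P / t⁻¹ ^ d)) := by
  obtain ⟨L, hL⟩ := exists_laurentPolynomial_tsum_sub_tsum n p b
  obtain ⟨P, d, hP⟩ := exists_aeval_div_eq_eval₂ (K := ℂ) L
  have hsmall : ∀ t : ℂ, 0 < ‖t‖ → ‖t‖ < 1 →
      Summable (‖seriesTerm t n p b 0 ·‖) ∧ Summable (‖seriesTerm t n p b 1 ·‖) ∧
        ∑' k, seriesTerm t n p b 0 k - ∑' k, seriesTerm t n p b 1 k =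
          Polynomial.aeval t P / t ^ d := fun t h₀ h₁ =>
    have ht := norm_pos_iff.mp h₀
    ⟨summable_norm_seriesTerm n p b 0 ht h₁, summable_norm_seriesTerm n p b 1 ht h₁,
      (hL t ht h₁).trans (hP t ht)⟩
  refine ⟨P, d, ?_, fun t h₁ => ?_⟩
  · simpa only [seriesTerm, Nat.cast_zero, Nat.cast_one, add_zero, sub_zero] using hsmall
  have ht : t ≠ 0 := norm_pos_iff.mp (one_pos.trans h₁)
  obtain ⟨hs₀, hs₁, heq⟩ := hsmall t⁻¹ (by simpa using ht)
    (by rw [norm_inv]; exact inv_lt_one_of_one_lt₀ h₁)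
  have hflip₀ := zpow_neg_summand_eq_mul_seriesTerm_inv n p b 0 ht
  have hflip₁ := zpow_neg_summand_eq_mul_seriesTerm_inv n p b 1 ht
  simp only [Nat.cast_zero, Nat.cast_one, add_zero, sub_zero] at hflip₀ hflip₁
  simp only [hflip₀, hflip₁, norm_mul, tsum_mul_left, ← mul_sub, heq]
  exact ⟨hs₀.mul_left _, hs₁.mul_left _, trivial⟩

/-- There is a Laurent polynomial `P ∈ ℤ[t,t⁻¹]` (encoded as `P₀(t)/t^d` with
`P₀ ∈ ℤ[t]`) such that, with `q := t^p`:
(a) for `0 < |t| < 1`,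
`∑_{k≥0, k≡b−n (p)} t^{(n+k)²} q^{−nk} (q^{k+1};q)_{2n}
 − ∑_{k≥0, k≡b−n−1 (p)} t^{(n+k+1)²} q^{−nk} (q^{k+1};q)_{2n} = P(t)`, and
(b) for `|t| > 1` the analogous series with `t^{−(n+k)²}`, `t^{−(n+k+1)²}` equals
`q^{n(2n+1)} P(t⁻¹)`; all four series converging absolutely. -/
theorem mod_p_theta_substitution_rational (n p : ℕ) (hp : 1 ≤ p) (b : ℤ) :
    ∃ (P : Polynomial ℤ) (d : ℕ),
      (∀ t : ℂ, 0 < ‖t‖ → ‖t‖ < 1 →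
        Summable (fun k : ℕ => ‖(if (k : ℤ) ≡ b - n [ZMOD (p : ℤ)] then
            t ^ ((n + k) ^ 2) * (t ^ p) ^ (-(n * k : ℤ)) *
              qPoch ((t ^ p) ^ (k + 1)) (t ^ p) (2 * n) else 0)‖) ∧
        Summable (fun k : ℕ => ‖(if (k : ℤ) ≡ b - n - 1 [ZMOD (p : ℤ)] then
            t ^ ((n + k + 1) ^ 2) * (t ^ p) ^ (-(n * k : ℤ)) *
              qPoch ((t ^ p) ^ (k + 1)) (t ^ p) (2 * n) else 0)‖) ∧
        (∑' k : ℕ, if (k : ℤ) ≡ b - n [ZMOD (p : ℤ)] then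
            t ^ ((n + k) ^ 2) * (t ^ p) ^ (-(n * k : ℤ)) *
              qPoch ((t ^ p) ^ (k + 1)) (t ^ p) (2 * n) else 0) -
        (∑' k : ℕ, if (k : ℤ) ≡ b - n - 1 [ZMOD (p : ℤ)] then
            t ^ ((n + k + 1) ^ 2) * (t ^ p) ^ (-(n * k : ℤ)) *
              qPoch ((t ^ p) ^ (k + 1)) (t ^ p) (2 * n) else 0)
          = Polynomial.aeval t P / t ^ d) ∧
      (∀ t : ℂ, 1 < ‖t‖ →
        Summable (fun k : ℕ => ‖(if (k : ℤ) ≡ b - n [ZMOD (p : ℤ)] then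
            t ^ (-((n + k : ℤ) ^ 2)) * (t ^ p) ^ (-(n * k : ℤ)) *
              qPoch ((t ^ p) ^ (k + 1)) (t ^ p) (2 * n) else 0)‖) ∧
        Summable (fun k : ℕ => ‖(if (k : ℤ) ≡ b - n - 1 [ZMOD (p : ℤ)] then
            t ^ (-((n + k + 1 : ℤ) ^ 2)) * (t ^ p) ^ (-(n * k : ℤ)) *
              qPoch ((t ^ p) ^ (k + 1)) (t ^ p) (2 * n) else 0)‖) ∧
        (∑' k : ℕ, if (k : ℤ) ≡ b - n [ZMOD (p : ℤ)] then
            t ^ (-((n + k : ℤ) ^ 2)) * (t ^ p) ^ (-(n * k : ℤ)) *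
              qPoch ((t ^ p) ^ (k + 1)) (t ^ p) (2 * n) else 0) -
        (∑' k : ℕ, if (k : ℤ) ≡ b - n - 1 [ZMOD (p : ℤ)] then
            t ^ (-((n + k + 1 : ℤ) ^ 2)) * (t ^ p) ^ (-(n * k : ℤ)) *
              qPoch ((t ^ p) ^ (k + 1)) (t ^ p) (2 * n) else 0)
          = (t ^ p) ^ (n * (2 * n + 1)) * (Polynomial.aeval t⁻¹ P / t⁻¹ ^ d)) :=
  mod_p_theta_substitution_rational_general n p b
end
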